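/- arXiv:2305.12658 — 2 statements merged into one kernel-verified Lean document; each statement's English description precedes it below -/
import Mathlib

section
/- If the DDGI of Â exists, then Â^D b̂ is the unique solution of the system Âx̂ = b̂ subject to x̂ ∈ R(Â^k), where k = Ind(Â). -/
open Matrix Finset

noncomputable section

/-- The dual matrix `A + εB` as a matrix over the dual numbers `ℝ[ε]/(ε²)`. -/
def dmat {m : Type*} (A B : Matrix m m ℝ) : Matrix m m (DualNumber ℝ) :=
  Matrix.of fun i j => TrivSqZeroExt.inl (A i j) + TrivSqZeroExt.inr (B i j)

/-- `x` is a Drazin inverse of `a` with index parameter `k`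
(for `k = 1` this is the group inverse). -/
def IsDrazin {R : Type*} [Monoid R] (k : ℕ) (a x : R) : Prop :=
  a ^ k * x * a = a ^ k ∧ x * a * x = x ∧ a * x = x * a

/-- `A` has index `k`: `k` is the smallest nonnegative integer with
`rank (A^k) = rank (A^(k+1))`. -/
def hasIndex {m : Type*} [Fintype m] [DecidableEq m] (A : Matrix m m ℝ) (k : ℕ) : Prop :=
  (A ^ (k + 1)).rank = (A ^ k).rank ∧ ∀ j < k, (A ^ (j + 1)).rank ≠ (A ^ j).rank

/-- `D = A^{k-1} B + A^{k-2} B A + ⋯ + B A^{k-1}`. -/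
def dsum {m : Type*} [Fintype m] [DecidableEq m] (A B : Matrix m m ℝ) (k : ℕ) :
    Matrix m m ℝ :=
  ∑ i ∈ Finset.range k, A ^ i * B * A ^ (k - 1 - i)

/-! The idempotent `x * a` commutes with `a`, fixes `x` and acts as the identity on the range
of `a ^ k`. So a solution `v = a ^ k * z` of `a * v = b` satisfies `v = x * a * v = x * b`, and
`x * b = a ^ k * (x ^ (k + 1) * b)` does lie in that range. -/

namespace IsDrazin

variable {R : Type*} [Monoid R] {k : ℕ} {a x : R}

theorem commute (h : IsDrazin k a x) : Commute a x := h.2.2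

theorem mul_mul_pow (h : IsDrazin k a x) : x * a * a ^ k = a ^ k := by
  calc x * a * a ^ k = x * a ^ k * a := by rw [mul_assoc, ← pow_succ', pow_succ, mul_assoc]
    _ = a ^ k * x * a := by rw [(h.commute.pow_left k).eq]
    _ = a ^ k := h.1

theorem mul_mul_self_pow (h : IsDrazin k a x) (j : ℕ) : x * (x * a) ^ j = x := by
  induction j with
  | zero => rw [pow_zero, mul_one]
  | succ j ih =>
    have hxxa : x * (x * a) = x := by rw [← h.commute.eq, ← mul_assoc, h.2.1]
    rw [pow_succ', ← mul_assoc, hxxa, ih]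

theorem pow_mul_pow_succ (h : IsDrazin k a x) : a ^ k * x ^ (k + 1) = x := by
  rw [(h.commute.pow_pow k (k + 1)).eq, pow_succ', mul_assoc,
    ← h.commute.symm.mul_pow, h.mul_mul_self_pow]

section Matrix

variable {m S : Type*} [Fintype m] [DecidableEq m] [Semiring S] {M X : Matrix m m S}

theorem exists_pow_mulVec_eq_mulVec (h : IsDrazin k M X) (b : m → S) :
    ∃ z, (M ^ k) *ᵥ z = X *ᵥ b :=
  ⟨X ^ (k + 1) *ᵥ b, by rw [mulVec_mulVec, h.pow_mul_pow_succ]⟩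

theorem eq_mulVec_of_mulVec_eq (h : IsDrazin k M X) {v b : m → S}
    (hv : M *ᵥ v = b) {z : m → S} (hz : (M ^ k) *ᵥ z = v) : v = X *ᵥ b := by
  rw [← hv, ← hz, mulVec_mulVec, mulVec_mulVec, h.mul_mul_pow]

end Matrix

end IsDrazin

theorem ddgi_unique_solution_in_range_general {n k : ℕ} (A B : Matrix (Fin n) (Fin n) ℝ)
    (Xhat : Matrix (Fin n) (Fin n) (DualNumber ℝ))
    (hX : IsDrazin k (dmat A B) Xhat)
    (b : Fin n → DualNumber ℝ)
    (hb : (dmat A B).mulVec (Xhat.mulVec b) = b) :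
    ((dmat A B).mulVec (Xhat.mulVec b) = b ∧
      ∃ z : Fin n → DualNumber ℝ, ((dmat A B) ^ k).mulVec z = Xhat.mulVec b) ∧
    (∀ x : Fin n → DualNumber ℝ, (dmat A B).mulVec x = b →
      (∃ z : Fin n → DualNumber ℝ, ((dmat A B) ^ k).mulVec z = x) →
      x = Xhat.mulVec b) :=
  ⟨⟨hb, hX.exists_pow_mulVec_eq_mulVec b⟩,
    fun _ hx ⟨_, hz⟩ => hX.eq_mulVec_of_mulVec_eq hx hz⟩

theorem ddgi_unique_solution_in_range {n k : ℕ} (A B : Matrix (Fin n) (Fin n) ℝ)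
    (hk : hasIndex A k)
    (Xhat : Matrix (Fin n) (Fin n) (DualNumber ℝ))
    (hX : IsDrazin k (dmat A B) Xhat)
    (b : Fin n → DualNumber ℝ)
    (hb : (dmat A B).mulVec (Xhat.mulVec b) = b) :
    ((dmat A B).mulVec (Xhat.mulVec b) = b ∧
      ∃ z : Fin n → DualNumber ℝ, ((dmat A B) ^ k).mulVec z = Xhat.mulVec b) ∧
    (∀ x : Fin n → DualNumber ℝ, (dmat A B).mulVec x = b →
      (∃ z : Fin n → DualNumber ℝ, ((dmat A B) ^ k).mulVec z = x) →
      x = Xhat.mulVec b) :=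
  ddgi_unique_solution_in_range_general A B Xhat hX b hb
end
end

section
/- If the DGGI of X̂ = X + εX₀ exists and X̂ ≤ Ŷ in the D-group order, then in a basis P in which X = P·diag(C,0)·P⁻¹ with C invertible and X₀ = P·[[X₁,X₂],[X₃,0]]·P⁻¹, the matrix Ŷ has the form Ŷ = P·diag(C,B)·P⁻¹ + ε P·[[X₁, X₂ − C R₂ B],[X₃ − B R₃ C, Y₄]]·P⁻¹ for some arbitrary Y₄, where R = P·[[R₁,R₂],[R₃,R₄]]·P⁻¹ is the dual part of X̂^#. -/
open Matrix Finset

noncomputable section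

/-! In the basis `P` every matrix in sight is a block matrix, and conjugation by `P` commutes
with sums and products, so both order equations can be read blockwise. Their real parts are the
group order `X ≤# Y`, which forces `Y = P·diag(C, B)·P⁻¹`. Their dual parts, multiplied by `C` on
the appropriate side, give the `(1,1)` and `(1,2)` blocks of `Y₀` from the left equation and the
`(2,1)` block from the right one; nothing constrains the `(2,2)` block. -/

section DualMatrix

variable {m : Type*}

theorem dmat_mul [Fintype m] (A B C D : Matrix m m ℝ) :
    dmat A B * dmat C D = dmat (A * C) (A * D + B * C) := by
  ext i j <;>
  simp [dmat, Matrix.mul_apply, TrivSqZeroExt.fst_sum, TrivSqZeroExt.snd_sum,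
    mul_add, add_mul, Finset.sum_add_distrib, mul_comm, add_comm]

theorem dmat_inj {A B C D : Matrix m m ℝ} : dmat A B = dmat C D ↔ A = C ∧ B = D := by
  refine ⟨fun h => ⟨?_, ?_⟩, fun ⟨hA, hB⟩ => hA ▸ hB ▸ rfl⟩ <;> ext i j
  · simpa [dmat] using congrArg TrivSqZeroExt.fst (congrFun (congrFun h i) j)
  · simpa [dmat] using congrArg TrivSqZeroExt.snd (congrFun (congrFun h i) j)

end DualMatrix

section Similarity

variable {n α : Type*} [Fintype n] [DecidableEq n] [CommRing α] {P : Matrix n n α}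

theorem conj_mul_conj (hP : IsUnit P) (A B : Matrix n n α) :
    P * A * P⁻¹ * (P * B * P⁻¹) = P * (A * B) * P⁻¹ := by
  simp only [Matrix.mul_assoc,
    Matrix.nonsing_inv_mul_cancel_left _ _ ((isUnit_iff_isUnit_det P).mp hP)]

theorem conj_add_conj (A B : Matrix n n α) :
    P * A * P⁻¹ + P * B * P⁻¹ = P * (A + B) * P⁻¹ := by
  rw [Matrix.mul_add, Matrix.add_mul]

theorem conj_inj (hP : IsUnit P) {A B : Matrix n n α} :
    P * A * P⁻¹ = P * B * P⁻¹ ↔ A = B := by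
  have hdet := (isUnit_iff_isUnit_det P).mp hP
  refine ⟨fun h => ?_, fun h => h ▸ rfl⟩
  simpa [Matrix.mul_assoc, Matrix.nonsing_inv_mul _ hdet,
    Matrix.nonsing_inv_mul_cancel_left _ _ hdet] using
    congrArg (fun M => P⁻¹ * M * P) h

end Similarity

theorem exists_eq_conj_fromBlocks {k l : Type*} [Fintype k] [Fintype l] [DecidableEq k]
    [DecidableEq l] {α : Type*} [CommRing α] {P : Matrix (k ⊕ l) (k ⊕ l) α} (hP : IsUnit P)
    (Y : Matrix (k ⊕ l) (k ⊕ l) α) :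
    ∃ Y₁ Y₂ Y₃ Y₄, Y = P * fromBlocks Y₁ Y₂ Y₃ Y₄ * P⁻¹ := by
  have hdet := (isUnit_iff_isUnit_det P).mp hP
  let Y' := P⁻¹ * Y * P
  refine ⟨Y'.toBlocks₁₁, Y'.toBlocks₁₂, Y'.toBlocks₂₁, Y'.toBlocks₂₂, ?_⟩
  simp only [Y', fromBlocks_toBlocks, Matrix.mul_assoc, Matrix.mul_nonsing_inv _ hdet,
    Matrix.mul_one, Matrix.mul_nonsing_inv_cancel_left _ _ hdet]

section Blocks

variable {k l α : Type*} [Fintype k] [Fintype l] [DecidableEq k] [CommRing α]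
  {C : Matrix k k α}

theorem eq_diag_of_groupOrder_fromBlocks (hC : IsUnit C)
    {Y₁ : Matrix k k α} {Y₂ : Matrix k l α} {Y₃ : Matrix l k α} {Y₄ : Matrix l l α}
    (hl : fromBlocks C⁻¹ 0 0 0 * fromBlocks C 0 0 0 =
      fromBlocks C⁻¹ 0 0 0 * fromBlocks Y₁ Y₂ Y₃ Y₄)
    (hr : fromBlocks C 0 0 0 * fromBlocks C⁻¹ 0 0 0 =
      fromBlocks Y₁ Y₂ Y₃ Y₄ * fromBlocks C⁻¹ 0 0 0) :
    Y₁ = C ∧ Y₂ = 0 ∧ Y₃ = 0 := by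
  have hdet := (isUnit_iff_isUnit_det C).mp hC
  simp only [fromBlocks_multiply, Matrix.mul_zero, Matrix.zero_mul, add_zero,
    fromBlocks_inj] at hl hr
  obtain ⟨h₁, h₂, -, -⟩ := hl
  obtain ⟨-, -, h₃, -⟩ := hr
  refine ⟨?_, ?_, ?_⟩
  · rw [← Matrix.mul_nonsing_inv_cancel_left C Y₁ hdet, ← h₁,
      Matrix.mul_nonsing_inv_cancel_left C C hdet]
  · rw [← Matrix.mul_nonsing_inv_cancel_left C Y₂ hdet, ← h₂, Matrix.mul_zero]
  · rw [← Matrix.nonsing_inv_mul_cancel_right C Y₃ hdet, ← h₃, Matrix.zero_mul]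

theorem dualPart_eq_of_dgroupOrder_fromBlocks (hC : IsUnit C) {B : Matrix l l α}
    {X₁ R₁ W₁ : Matrix k k α} {X₂ R₂ W₂ : Matrix k l α} {X₃ R₃ W₃ : Matrix l k α}
    {X₄ R₄ W₄ : Matrix l l α}
    (hl : fromBlocks C⁻¹ 0 0 0 * fromBlocks X₁ X₂ X₃ X₄ +
        fromBlocks R₁ R₂ R₃ R₄ * fromBlocks C 0 0 0 =
      fromBlocks C⁻¹ 0 0 0 * fromBlocks W₁ W₂ W₃ W₄ +
        fromBlocks R₁ R₂ R₃ R₄ * fromBlocks C 0 0 B)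
    (hr : fromBlocks C 0 0 0 * fromBlocks R₁ R₂ R₃ R₄ +
        fromBlocks X₁ X₂ X₃ X₄ * fromBlocks C⁻¹ 0 0 0 =
      fromBlocks C 0 0 B * fromBlocks R₁ R₂ R₃ R₄ +
        fromBlocks W₁ W₂ W₃ W₄ * fromBlocks C⁻¹ 0 0 0) :
    W₁ = X₁ ∧ W₂ = X₂ - C * R₂ * B ∧ W₃ = X₃ - B * R₃ * C := by
  have hdet := (isUnit_iff_isUnit_det C).mp hC
  simp only [fromBlocks_multiply, fromBlocks_add, Matrix.mul_zero, Matrix.zero_mul, add_zero,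
    zero_add, fromBlocks_inj] at hl hr
  obtain ⟨h₁, h₂, -, -⟩ := hl
  obtain ⟨-, -, h₃, -⟩ := hr
  refine ⟨?_, ?_, ?_⟩
  · rw [← Matrix.mul_nonsing_inv_cancel_left C W₁ hdet, ← add_right_cancel h₁,
      Matrix.mul_nonsing_inv_cancel_left C X₁ hdet]
  · rw [eq_sub_iff_add_eq, ← Matrix.mul_nonsing_inv_cancel_left C X₂ hdet, h₂, Matrix.mul_add,
      Matrix.mul_nonsing_inv_cancel_left C W₂ hdet, Matrix.mul_assoc]
  · rw [eq_sub_iff_add_eq, ← Matrix.nonsing_inv_mul_cancel_right C X₃ hdet, h₃, Matrix.add_mul,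
      Matrix.nonsing_inv_mul_cancel_right C W₃ hdet, Matrix.mul_assoc, add_comm]

end Blocks

theorem dgroup_order_representation_general {r s : ℕ}
    (P : Matrix (Fin r ⊕ Fin s) (Fin r ⊕ Fin s) ℝ) (hP : IsUnit P)
    (C : Matrix (Fin r) (Fin r) ℝ) (hC : IsUnit C)
    (X1 : Matrix (Fin r) (Fin r) ℝ) (X2 : Matrix (Fin r) (Fin s) ℝ)
    (X3 : Matrix (Fin s) (Fin r) ℝ)
    (R1 : Matrix (Fin r) (Fin r) ℝ) (R2 : Matrix (Fin r) (Fin s) ℝ)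
    (R3 : Matrix (Fin s) (Fin r) ℝ) (R4 : Matrix (Fin s) (Fin s) ℝ)
    (X X0 Xg R Y Y0 : Matrix (Fin r ⊕ Fin s) (Fin r ⊕ Fin s) ℝ)
    (hX : X = P * Matrix.fromBlocks C 0 0 0 * P⁻¹)
    (hX0 : X0 = P * Matrix.fromBlocks X1 X2 X3 0 * P⁻¹)
    (hXg : Xg = P * Matrix.fromBlocks C⁻¹ 0 0 0 * P⁻¹)
    (hRdef : R = P * Matrix.fromBlocks R1 R2 R3 R4 * P⁻¹)
    (horder : dmat Xg R * dmat X X0 = dmat Xg R * dmat Y Y0 ∧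
      dmat X X0 * dmat Xg R = dmat Y Y0 * dmat Xg R) :
    ∃ (Bm : Matrix (Fin s) (Fin s) ℝ) (Y4 : Matrix (Fin s) (Fin s) ℝ),
      Y = P * Matrix.fromBlocks C 0 0 Bm * P⁻¹ ∧
      Y0 = P * Matrix.fromBlocks X1 (X2 - C * R2 * Bm) (X3 - Bm * R3 * C) Y4 * P⁻¹ := by
  obtain ⟨hl, hr⟩ := horder
  simp only [dmat_mul, dmat_inj] at hl hr
  obtain ⟨Y1, Y2, Y3, B, rfl⟩ := exists_eq_conj_fromBlocks hP Y
  obtain ⟨W1, W2, W3, W4, rfl⟩ := exists_eq_conj_fromBlocks hP Y0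
  subst hX hX0 hXg hRdef
  simp only [conj_mul_conj hP, conj_add_conj, conj_inj hP] at hl hr
  obtain ⟨rfl, rfl, rfl⟩ := eq_diag_of_groupOrder_fromBlocks hC hl.1 hr.1
  obtain ⟨rfl, rfl, rfl⟩ := dualPart_eq_of_dgroupOrder_fromBlocks hC hl.2 hr.2
  exact ⟨B, W4, rfl, rfl⟩

theorem dgroup_order_representation {r s : ℕ}
    (P : Matrix (Fin r ⊕ Fin s) (Fin r ⊕ Fin s) ℝ) (hP : IsUnit P)
    (C : Matrix (Fin r) (Fin r) ℝ) (hC : IsUnit C)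
    (X1 : Matrix (Fin r) (Fin r) ℝ) (X2 : Matrix (Fin r) (Fin s) ℝ)
    (X3 : Matrix (Fin s) (Fin r) ℝ)
    (R1 : Matrix (Fin r) (Fin r) ℝ) (R2 : Matrix (Fin r) (Fin s) ℝ)
    (R3 : Matrix (Fin s) (Fin r) ℝ) (R4 : Matrix (Fin s) (Fin s) ℝ)
    (X X0 Xg R Y Y0 : Matrix (Fin r ⊕ Fin s) (Fin r ⊕ Fin s) ℝ)
    (hX : X = P * Matrix.fromBlocks C 0 0 0 * P⁻¹)
    (hX0 : X0 = P * Matrix.fromBlocks X1 X2 X3 0 * P⁻¹)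
    (hXg : Xg = P * Matrix.fromBlocks C⁻¹ 0 0 0 * P⁻¹)
    (hRdef : R = P * Matrix.fromBlocks R1 R2 R3 R4 * P⁻¹)
    (hhash : IsDrazin 1 (dmat X X0) (dmat Xg R))
    (horder : dmat Xg R * dmat X X0 = dmat Xg R * dmat Y Y0 ∧
      dmat X X0 * dmat Xg R = dmat Y Y0 * dmat Xg R) :
    ∃ (Bm : Matrix (Fin s) (Fin s) ℝ) (Y4 : Matrix (Fin s) (Fin s) ℝ),
      Y = P * Matrix.fromBlocks C 0 0 Bm * P⁻¹ ∧
      Y0 = P * Matrix.fromBlocks X1 (X2 - C * R2 * Bm) (X3 - Bm * R3 * C) Y4 * P⁻¹ :=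
  dgroup_order_representation_general P hP C hC X1 X2 X3 R1 R2 R3 R4 X X0 Xg R Y Y0 hX hX0 hXg hRdef
    horder
end
end
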